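/- arXiv:2505.23437 — 2 statements merged into one kernel-verified Lean document; each statement's English description precedes it below -/
import Mathlib

section
/- Optimality of risk-thresholding (finite version): let Ω be a finite set with probability mass p, r : Ω → [0,∞) a conditional risk, c ∈ (0,1], and β with P(r<β) ≤ c ≤ P(r≤β). Let g* : Ω → [0,1] satisfy g*=1 on {r<β}, g*=0 on {r>β}, and Σ p·g* = c. Then for every g : Ω → [0,1] with Σ_ω p(ω) g(ω) ≥ c, the selective risk satisfies Σ p·g·r / Σ p·g ≥ Σ p·g*·r / c. -/
/-!
Pointwise, `(g - g*) (r - β) ≥ 0`: where `r < β` we have `g* = 1 ≥ g`, and where `r > β` we have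
`g* = 0 ≤ g`. Summing against `p` gives `A - β B ≥ A* - β c` for the selected risk masses
`A = Σ p g r`, `A* = Σ p g* r` and the coverage `B = Σ p g ≥ c`. Since `g*` only selects
points with `r ≤ β`, also `A* ≤ β c`, so `A* B ≤ A* c + β c (B - c) ≤ c A`.
-/

open Finset

def IsThresholdSelector {Ω : Type*} (r : Ω → ℝ) (β : ℝ) (gstar : Ω → ℝ) : Prop :=
  (∀ ω, r ω < β → gstar ω = 1) ∧ ∀ ω, β < r ω → gstar ω = 0

namespace IsThresholdSelector

variable {Ω : Type*} {r gstar : Ω → ℝ} {β : ℝ}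

theorem sub_mul_sub_nonneg (h : IsThresholdSelector r β gstar) {g : Ω → ℝ} (ω : Ω)
    (hg : g ω ∈ Set.Icc (0 : ℝ) 1) : 0 ≤ (g ω - gstar ω) * (r ω - β) := by
  rcases lt_trichotomy (r ω) β with hlt | heq | hgt
  · rw [h.1 ω hlt]
    exact mul_nonneg_of_nonpos_of_nonpos (by linarith [hg.2]) (by linarith)
  · simp [heq]
  · rw [h.2 ω hgt]
    exact mul_nonneg (by linarith [hg.1]) (by linarith)

theorem sum_mul_le (h : IsThresholdSelector r β gstar) (s : Finset Ω) {p : Ω → ℝ}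
    (hp : ∀ ω, 0 ≤ p ω) (hgstar : ∀ ω, 0 ≤ gstar ω) :
    ∑ ω ∈ s, p ω * gstar ω * r ω ≤ β * ∑ ω ∈ s, p ω * gstar ω := by
  rw [mul_sum]
  refine sum_le_sum fun ω _ => ?_
  rcases le_or_gt (r ω) β with hle | hgt
  · rw [mul_comm β]
    exact mul_le_mul_of_nonneg_left hle (mul_nonneg (hp ω) (hgstar ω))
  · simp [h.2 ω hgt]

/-- A finite Neyman–Pearson lemma. -/
theorem sum_sub_le (h : IsThresholdSelector r β gstar) (s : Finset Ω) {p g : Ω → ℝ}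
    (hp : ∀ ω, 0 ≤ p ω) (hg : ∀ ω, g ω ∈ Set.Icc (0 : ℝ) 1) :
    ∑ ω ∈ s, p ω * gstar ω * r ω - β * ∑ ω ∈ s, p ω * gstar ω
      ≤ ∑ ω ∈ s, p ω * g ω * r ω - β * ∑ ω ∈ s, p ω * g ω := by
  have hpointwise : 0 ≤ ∑ ω ∈ s, p ω * ((g ω - gstar ω) * (r ω - β)) :=
    sum_nonneg fun ω _ => mul_nonneg (hp ω) (h.sub_mul_sub_nonneg ω (hg ω))
  have hexpand : ∑ ω ∈ s, p ω * ((g ω - gstar ω) * (r ω - β))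
      = (∑ ω ∈ s, p ω * g ω * r ω - β * ∑ ω ∈ s, p ω * g ω)
        - (∑ ω ∈ s, p ω * gstar ω * r ω - β * ∑ ω ∈ s, p ω * gstar ω) := by
    simp only [mul_sum, ← sum_sub_distrib]
    exact sum_congr rfl fun ω _ => by ring
  linarith

end IsThresholdSelector

theorem threshold_optimal_general {Ω : Type*} [Fintype Ω] (p : Ω → ℝ)
    (hp0 : ∀ ω, 0 ≤ p ω) (r : Ω → ℝ)
    (c β : ℝ) (hc0 : 0 < c)
    (gstar : Ω → ℝ) (hgstar01 : ∀ ω, gstar ω ∈ Set.Icc (0 : ℝ) 1)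
    (hgstar1 : ∀ ω, r ω < β → gstar ω = 1)
    (hgstar0 : ∀ ω, β < r ω → gstar ω = 0)
    (hgstarcov : ∑ ω, p ω * gstar ω = c)
    (g : Ω → ℝ) (hg01 : ∀ ω, g ω ∈ Set.Icc (0 : ℝ) 1)
    (hgcov : c ≤ ∑ ω, p ω * g ω) :
    (∑ ω, p ω * gstar ω * r ω) / c
      ≤ (∑ ω, p ω * g ω * r ω) / (∑ ω, p ω * g ω) := by
  have hthreshold : IsThresholdSelector r β gstar := ⟨hgstar1, hgstar0⟩
  have hrisk_le := hthreshold.sum_mul_le univ hp0 fun ω => (hgstar01 ω).1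
  have hoptimal := hthreshold.sum_sub_le univ hp0 hg01
  rw [hgstarcov] at hrisk_le hoptimal
  rw [div_le_div_iff₀ hc0 (hc0.trans_le hgcov)]
  nlinarith

/-- Optimality of risk-thresholding (finite version): the thresholding selection
function `g*` minimizes the selective risk among all selection functions with
coverage at least `c`. -/
theorem threshold_optimal {Ω : Type*} [Fintype Ω] (p : Ω → ℝ)
    (hp0 : ∀ ω, 0 ≤ p ω) (hp1 : ∑ ω, p ω = 1) (r : Ω → ℝ) (hr0 : ∀ ω, 0 ≤ r ω)
    (c β : ℝ) (hc0 : 0 < c) (hc1 : c ≤ 1)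
    (hlt : ∑ ω ∈ univ.filter (fun ω => r ω < β), p ω ≤ c)
    (hle : c ≤ ∑ ω ∈ univ.filter (fun ω => r ω ≤ β), p ω)
    (gstar : Ω → ℝ) (hgstar01 : ∀ ω, gstar ω ∈ Set.Icc (0 : ℝ) 1)
    (hgstar1 : ∀ ω, r ω < β → gstar ω = 1)
    (hgstar0 : ∀ ω, β < r ω → gstar ω = 0)
    (hgstarcov : ∑ ω, p ω * gstar ω = c)
    (g : Ω → ℝ) (hg01 : ∀ ω, g ω ∈ Set.Icc (0 : ℝ) 1)
    (hgcov : c ≤ ∑ ω, p ω * g ω) :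
    (∑ ω, p ω * gstar ω * r ω) / c
      ≤ (∑ ω, p ω * g ω * r ω) / (∑ ω, p ω * g ω) :=
  threshold_optimal_general p hp0 r c β hc0 gstar hgstar01 hgstar1 hgstar0 hgstarcov g hg01 hgcov
end

section
/- Necessity of full acceptance below the threshold (finite version): under the setting of the optimal thresholding theorem, if g : Ω → [0,1] has coverage exactly c, vanishes on {r>β}, but Σ_{ω: r(ω)<β} p(ω)(1−g(ω)) > 0 (i.e., it fails to fully accept the low-risk region), and β > r(ω) strictly for those ω, then the selective risk of g is strictly larger than that of the thresholding rule g*: Σ p·g·r > Σ p·g*·r. -/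
/-!
Since `g` and `g*` have the same coverage, the difference of their risks is
`∑ p (g - g*) (r - β)`. Every term is nonnegative, because `g*` accepts fully where
`r < β` and rejects where `r > β`; on the low-risk region the term is
`p (1 - g) (β - r)`, which is positive somewhere by the failure of full acceptance.
-/

open Finset

theorem Finset.sum_mul_mul_sub_eq_of_sum_mul_eq {ι R : Type*} [CommRing R] (s : Finset ι)
    (p f h r : ι → R) (β : R) (hcov : ∑ i ∈ s, p i * f i = ∑ i ∈ s, p i * h i) :
    ∑ i ∈ s, p i * f i * r i - ∑ i ∈ s, p i * h i * r i
      = ∑ i ∈ s, p i * (f i - h i) * (r i - β) := by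
  have hβ : ∑ i ∈ s, p i * (f i - h i) * β = 0 := by
    rw [← Finset.sum_mul]
    simp only [mul_sub, Finset.sum_sub_distrib, hcov, sub_self, zero_mul]
  rw [← Finset.sum_sub_distrib, ← add_zero (∑ i ∈ s, p i * (f i - h i) * (r i - β)), ← hβ,
    ← Finset.sum_add_distrib]
  exact Finset.sum_congr rfl fun i _ => by ring

theorem sub_mul_sub_nonneg_of_threshold {R : Type*} [Field R] [LinearOrder R]
    [IsStrictOrderedRing R] {x y r β : R} (hx0 : 0 ≤ x) (hx1 : x ≤ 1)
    (hy1 : r < β → y = 1) (hy0 : β < r → y = 0) : 0 ≤ (x - y) * (r - β) := by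
  rcases lt_trichotomy r β with hlt | rfl | hgt
  · rw [hy1 hlt]; exact mul_nonneg_of_nonpos_of_nonpos (by linarith) (by linarith)
  · simp
  · rw [hy0 hgt]; exact mul_nonneg (by linarith) (by linarith)

theorem threshold_full_acceptance_necessary_general {Ω : Type*} [Fintype Ω] (p : Ω → ℝ)
    (hp0 : ∀ ω, 0 ≤ p ω) (r : Ω → ℝ)
    (c β : ℝ)
    (gstar : Ω → ℝ)
    (hgstar1 : ∀ ω, r ω < β → gstar ω = 1)
    (hgstar0 : ∀ ω, β < r ω → gstar ω = 0)
    (hgstarcov : ∑ ω, p ω * gstar ω = c)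
    (g : Ω → ℝ) (hg01 : ∀ ω, g ω ∈ Set.Icc (0 : ℝ) 1)
    (hgcov : ∑ ω, p ω * g ω = c)
    (hfail : 0 < ∑ ω ∈ univ.filter (fun ω => r ω < β), p ω * (1 - g ω)) :
    ∑ ω, p ω * gstar ω * r ω < ∑ ω, p ω * g ω * r ω := by
  have hdiff := Finset.sum_mul_mul_sub_eq_of_sum_mul_eq univ p g gstar r β
    (hgcov.trans hgstarcov.symm)
  have hterm_nonneg : ∀ ω ∈ univ, 0 ≤ p ω * (g ω - gstar ω) * (r ω - β) := fun ω _ => by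
    rw [mul_assoc]
    exact mul_nonneg (hp0 ω) (sub_mul_sub_nonneg_of_threshold (hg01 ω).1 (hg01 ω).2
      (hgstar1 ω) (hgstar0 ω))
  obtain ⟨ω, hωL, hω⟩ := Finset.exists_lt_of_sum_lt
    (Finset.sum_const_zero.trans_lt hfail)
  have hrβ : r ω < β := (Finset.mem_filter.mp hωL).2
  have hterm_pos : 0 < p ω * (g ω - gstar ω) * (r ω - β) := by
    rw [hgstar1 ω hrβ, show p ω * (g ω - 1) * (r ω - β) = p ω * (1 - g ω) * (β - r ω) by ring]
    exact mul_pos hω (sub_pos.mpr hrβ)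
  linarith [Finset.sum_pos' hterm_nonneg ⟨ω, mem_univ ω, hterm_pos⟩]

/-- Necessity of full acceptance below the threshold (finite version): a feasible
selection function with coverage exactly `c` that vanishes above the threshold but
fails to fully accept the low-risk region has strictly larger selective risk than
the thresholding rule `g*`. -/
theorem threshold_full_acceptance_necessary {Ω : Type*} [Fintype Ω] (p : Ω → ℝ)
    (hp0 : ∀ ω, 0 ≤ p ω) (hp1 : ∑ ω, p ω = 1) (r : Ω → ℝ) (hr0 : ∀ ω, 0 ≤ r ω)
    (c β : ℝ) (hc0 : 0 < c) (hc1 : c ≤ 1)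
    (hlt : ∑ ω ∈ univ.filter (fun ω => r ω < β), p ω ≤ c)
    (hle : c ≤ ∑ ω ∈ univ.filter (fun ω => r ω ≤ β), p ω)
    (gstar : Ω → ℝ) (hgstar01 : ∀ ω, gstar ω ∈ Set.Icc (0 : ℝ) 1)
    (hgstar1 : ∀ ω, r ω < β → gstar ω = 1)
    (hgstar0 : ∀ ω, β < r ω → gstar ω = 0)
    (hgstarcov : ∑ ω, p ω * gstar ω = c)
    (g : Ω → ℝ) (hg01 : ∀ ω, g ω ∈ Set.Icc (0 : ℝ) 1)
    (hgcov : ∑ ω, p ω * g ω = c)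
    (hgvan : ∀ ω, β < r ω → g ω = 0)
    (hfail : 0 < ∑ ω ∈ univ.filter (fun ω => r ω < β), p ω * (1 - g ω)) :
    ∑ ω, p ω * gstar ω * r ω < ∑ ω, p ω * g ω * r ω :=
  threshold_full_acceptance_necessary_general p hp0 r c β gstar hgstar1 hgstar0 hgstarcov g hg01
    hgcov hfail
end
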